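/- Let μ > 0, R ≥ 0, ψ > 1/μ, ι > 0 be real numbers, and let (Δ_t)_{t≥1} be a sequence of nonnegative reals satisfying Δ_{t+1} ≤ (1 - μ·ψ/(t+ι))·Δ_t + (ψ/(t+ι))²·R for all t ≥ 1, where we assume μ·ψ/(t+ι) ≤ 1 for all t ≥ 1. Define v = max{ψ²R/(ψμ - 1), (ι+1)·Δ_1}. Then Δ_t ≤ v/(t+ι) for all t ≥ 1. -/

import Mathlib

theorem stmt_0 (μ R ψ ι : ℝ) (hμ : 0 < μ) (hR : 0 ≤ R) (hψ : 1 / μ < ψ) (hι : 0 < ι)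
    (Δ : ℕ → ℝ) (hΔ : ∀ t, 0 ≤ Δ t)
    (hrec : ∀ t : ℕ, 1 ≤ t →
      Δ (t + 1) ≤ (1 - μ * ψ / ((t : ℝ) + ι)) * Δ t + (ψ / ((t : ℝ) + ι)) ^ 2 * R)
    (hstep : ∀ t : ℕ, 1 ≤ t → μ * ψ / ((t : ℝ) + ι) ≤ 1)
    (v : ℝ) (hv : v = max (ψ ^ 2 * R / (ψ * μ - 1)) ((ι + 1) * Δ 1)) :
    ∀ t : ℕ, 1 ≤ t → Δ t ≤ v / ((t : ℝ) + ι) := by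
  have hμψ : 1 < ψ * μ := by
    rw [div_lt_iff₀ hμ] at hψ
    linarith
  have hv1 : ψ ^ 2 * R ≤ (ψ * μ - 1) * v := by
    have h1 : ψ ^ 2 * R / (ψ * μ - 1) ≤ v := hv ▸ le_max_left _ _
    rw [div_le_iff₀ (by linarith)] at h1
    linarith [h1]
  have hv0 : 0 ≤ v :=
    le_trans (mul_nonneg (by linarith) (hΔ 1)) (hv ▸ le_max_right _ _)
  intro t ht
  induction t with
  | zero => omega
  | succ n ih =>
    rcases Nat.eq_or_lt_of_le ht with h1 | h1
    · have : Δ 1 ≤ v / (1 + ι) := by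
        rw [le_div_iff₀ (by linarith)]
        have := hv ▸ le_max_right (ψ ^ 2 * R / (ψ * μ - 1)) ((ι + 1) * Δ 1)
        linarith
      obtain rfl : n = 0 := by omega
      simpa using this
    · have hn : 1 ≤ n := by omega
      have ihn := ih hn
      have hnι : (0:ℝ) < (n : ℝ) + ι := by positivity
      have hfac : 0 ≤ 1 - μ * ψ / ((n : ℝ) + ι) := by linarith [hstep n hn]
      have h2 : Δ (n + 1) ≤ (1 - μ * ψ / ((n : ℝ) + ι)) * (v / ((n : ℝ) + ι))
          + (ψ / ((n : ℝ) + ι)) ^ 2 * R :=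
        le_trans (hrec n hn) (by nlinarith [mul_le_mul_of_nonneg_left ihn hfac])
      have h3 : (1 - μ * ψ / ((n : ℝ) + ι)) * (v / ((n : ℝ) + ι))
          + (ψ / ((n : ℝ) + ι)) ^ 2 * R ≤ v / ((n : ℝ) + 1 + ι) := by
        have hpow : (0:ℝ) < ((n:ℝ) + ι) ^ 2 := by positivity
        have key : (1 - μ * ψ / ((n : ℝ) + ι)) * (v / ((n : ℝ) + ι))
            + (ψ / ((n : ℝ) + ι)) ^ 2 * R
            ≤ (((n : ℝ) + ι - 1) * v) / (((n : ℝ) + ι) ^ 2) := by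
          have e : (1 - μ * ψ / ((n : ℝ) + ι)) * (v / ((n : ℝ) + ι))
              = (((n : ℝ) + ι - μ * ψ) * v) / (((n : ℝ) + ι) ^ 2) := by
            have hd : ((n : ℝ) + ι) ≠ 0 := ne_of_gt hnι
            rw [show 1 - μ * ψ / ((n : ℝ) + ι) = (((n : ℝ) + ι) - μ * ψ) / ((n : ℝ) + ι) by
              field_simp, div_mul_div_comm, sq]
          have e2 : (ψ / ((n : ℝ) + ι)) ^ 2 * R = (ψ ^ 2 * R) / (((n : ℝ) + ι) ^ 2) := by
            field_simp
          rw [e, e2, ← add_div, div_le_div_iff₀ hpow hpow]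
          nlinarith [hv1]
        refine key.trans ?_
        rw [div_le_div_iff₀ (by positivity) (by linarith)]
        nlinarith [hnι, hv0]
      have := h2.trans h3
      push_cast
      convert this using 3 <;> ring
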